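/- arXiv:2210.06135 — 2 statements merged into one kernel-verified Lean document; each statement's English description precedes it below -/
import Mathlib

section
/- With T_t as above, for every f ∈ E with f ≥ 0, f ≠ 0, and every R > 0, there exists τ > 0 such that (T_t f)(x) > 0 for all x ∈ [−R, R] and all t ≥ τ. -/
open MeasureTheory Filter Topology

/-- With `(T_t f)(x) = φ(f)[f₀(x) - f₀(x+t)] + f(x+t)`, for every
`0 ≤ f ∈ E \ {0}` and every `R > 0` there is `τ > 0` such that `(T_t f)(x) > 0`
for all `x ∈ [-R,R]` and `t ≥ τ`. -/
theorem stmt4 (f₀ : ℝ → ℝ) (hf₀i : Integrable f₀) (hf₀c : Continuous f₀)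
    (hf₀0 : Tendsto f₀ (cocompact ℝ) (𝓝 0))
    (hf₀pos : ∀ x, 0 < f₀ x) (hf₀le : ∀ x, f₀ x ≤ 1) (hf₀int : ∫ x, f₀ x = 1)
    (f : ℝ → ℝ) (hfi : Integrable f) (hfc : Continuous f)
    (hf0 : Tendsto f (cocompact ℝ) (𝓝 0))
    (hfpos : ∀ x, 0 ≤ f x) (hfne : f ≠ 0) :
    ∀ R > (0:ℝ), ∃ τ > (0:ℝ), ∀ x ∈ Set.Icc (-R) R, ∀ t ≥ τ,
      0 < (∫ y, f y) * (f₀ x - f₀ (x + t)) + f (x + t) := by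
  intro R hR
  have hc : 0 < ∫ y, f y := by
    rw [integral_pos_iff_support_of_nonneg hfpos hfi]
    obtain ⟨x0, hx0⟩ : ∃ x, f x ≠ 0 := by
      by_contra h; push_neg at h; exact hfne (funext h)
    exact hfc.isOpen_support.measure_pos volume ⟨x0, hx0⟩
  obtain ⟨x₁, hx₁, hmin⟩ := isCompact_Icc.exists_isMinOn
    (Set.nonempty_Icc.mpr (by linarith)) (hf₀c.continuousOn :
      ContinuousOn f₀ (Set.Icc (-R) R))
  have hmpos : 0 < f₀ x₁ := hf₀pos x₁
  have hev : ∀ᶠ y in cocompact ℝ, f₀ y < f₀ x₁ :=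
    hf₀0.eventually_lt_const hmpos
  rw [hasBasis_cocompact.eventually_iff] at hev
  obtain ⟨K, hK, hKlt⟩ := hev
  obtain ⟨r, hr⟩ := hK.isBounded.subset_closedBall 0
  refine ⟨max r 0 + R + 1, by positivity, ?_⟩
  intro x hx t ht
  have hxt : x + t ∉ K := by
    intro hmem
    have := hr hmem
    rw [Metric.mem_closedBall, Real.dist_eq, sub_zero] at this
    have h1 : x + t ≥ -R + (max r 0 + R + 1) := by
      rcases hx with ⟨h, _⟩; linarith
    have h2 : r ≤ max r 0 := le_max_left _ _
    have := le_abs_self (x + t)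
    linarith
  have h3 : f₀ (x + t) < f₀ x₁ := hKlt hxt
  have h4 : f₀ x₁ ≤ f₀ x := hmin hx
  have h5 : 0 ≤ f (x + t) := hfpos _
  nlinarith
end

section
/- Let E be a Banach lattice, (P_n) a sequence of positive bounded operators on E converging strongly to the identity, and (T_t)_{t≥0} a C_0-semigroup on E with relatively compact orbits satisfying the LEP property: for every n and every f ≥ 0, f ≠ 0, there exists τ with P_n T_t f ≥ 0 for all t ≥ τ. Then for every x ∈ E with x ≥ 0, dist(T_t x, E_+) → 0 as t → ∞. -/
open Filter Topology

/-- A `C₀`-semigroup on a Banach lattice with relatively compact orbits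
satisfying the LEP property (w.r.t. positive operators `P_n` increasing strongly to the
identity) is individually asymptotically positive: `dist(T_t x, E₊) → 0` for `x ≥ 0`. -/
theorem stmt10 {E : Type*} [NormedAddCommGroup E] [Lattice E] [HasSolidNorm E] [IsOrderedAddMonoid E] [NormedSpace ℝ E] [CompleteSpace E]
    (P : ℕ → E →L[ℝ] E)
    (hPpos : ∀ (n : ℕ) (x : E), 0 ≤ x → 0 ≤ P n x)
    (hPmono : ∀ (n : ℕ) (x : E), 0 ≤ x → P n x ≤ P (n + 1) x)
    (hPlim : ∀ x : E, Tendsto (fun n => P n x) atTop (𝓝 x))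
    (T : ℝ → E →L[ℝ] E)
    (hT0 : T 0 = ContinuousLinearMap.id ℝ E)
    (hTsemi : ∀ s t : ℝ, 0 ≤ s → 0 ≤ t → T (s + t) = (T s).comp (T t))
    (hTcont : ∀ x : E, ContinuousOn (fun t => T t x) (Set.Ici (0:ℝ)))
    (hTorbit : ∀ x : E, IsCompact (closure ((fun t => T t x) '' Set.Ici (0:ℝ))))
    (hLEP : ∀ (n : ℕ) (f : E), 0 ≤ f → f ≠ 0 → ∃ τ : ℝ, ∀ t, τ ≤ t → 0 ≤ P n (T t f)) :
    ∀ x : E, 0 ≤ x →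
      Tendsto (fun t : ℝ => Metric.infDist (T t x) {y : E | 0 ≤ y}) atTop (𝓝 0) := by
  intro x hx
  rcases eq_or_ne x 0 with rfl | hx0
  · have h0 : ∀ t : ℝ, Metric.infDist (T t 0) {y : E | 0 ≤ y} = 0 := by
      intro t
      rw [map_zero]
      exact Metric.infDist_zero_of_mem (by simp)
    have heq : (fun t : ℝ => Metric.infDist (T t 0) {y : E | 0 ≤ y}) = fun _ => (0:ℝ) :=
      funext h0
    rw [heq]
    exact tendsto_const_nhds
  -- Banach–Steinhaus: uniform bound on ‖P n‖
  obtain ⟨C, hC⟩ : ∃ C, ∀ n, ‖P n‖ ≤ C := by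
    apply banach_steinhaus
    intro y
    have hb : BddAbove (Set.range fun n => ‖P n y‖) :=
      ((hPlim y).norm).bddAbove_range
    obtain ⟨c, hc⟩ := hb
    exact ⟨c, fun n => hc ⟨n, rfl⟩⟩
  have hC0 : 0 ≤ C := le_trans (norm_nonneg _) (hC 0)
  rw [Metric.tendsto_nhds]
  intro ε hε
  rw [eventually_atTop]
  set K := closure ((fun t => T t x) '' Set.Ici (0:ℝ)) with hKdef
  have hK : IsCompact K := hTorbit x
  set δ : ℝ := ε / (3 * (C + 1)) with hδdef
  have hδ : 0 < δ := by positivity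
  -- finite δ-net of K
  obtain ⟨s, hs⟩ := hK.elim_finite_subcover (fun y : E => Metric.ball y δ)
    (fun y => Metric.isOpen_ball)
    (fun z hz => Set.mem_iUnion.2 ⟨z, Metric.mem_ball_self hδ⟩)
  -- pick n working uniformly on the net
  have hev : ∀ᶠ n in atTop, ∀ y ∈ s, ‖P n y - y‖ < ε / 3 := by
    rw [Filter.eventually_all_finset]
    intro y hy
    have := (Metric.tendsto_nhds.mp (hPlim y)) (ε / 3) (by positivity)
    filter_upwards [this] with n hn
    rwa [dist_eq_norm] at hn
  obtain ⟨n, hn⟩ := hev.exists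
  obtain ⟨τ, hτ⟩ := hLEP n x hx hx0
  refine ⟨max τ 0, fun t ht => ?_⟩
  have ht0 : (0:ℝ) ≤ t := le_trans (le_max_right _ _) ht
  have htτ : τ ≤ t := le_trans (le_max_left _ _) ht
  have hmemK : T t x ∈ K := subset_closure ⟨t, Set.mem_Ici.mpr ht0, rfl⟩
  -- find a net point near T t x
  obtain ⟨z, hzs, hz⟩ : ∃ z ∈ s, dist (T t x) z < δ := by
    have := hs hmemK
    simp only [Set.mem_iUnion, Metric.mem_ball] at this
    obtain ⟨z, hzs, hz⟩ := this
    exact ⟨z, hzs, hz⟩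
  -- the key estimate
  have hbound : ‖P n (T t x) - T t x‖ < ε := by
    have h1 : ‖P n (T t x) - P n z‖ ≤ C * δ := by
      rw [← map_sub]
      calc ‖P n (T t x - z)‖ ≤ ‖P n‖ * ‖T t x - z‖ := (P n).le_opNorm _
        _ ≤ C * δ := by
            apply mul_le_mul (hC n) _ (norm_nonneg _) hC0
            rw [← dist_eq_norm]
            exact hz.le
    have h2 : ‖P n z - z‖ < ε / 3 := hn z hzs
    have h3 : ‖z - T t x‖ < δ := by
      rw [← dist_eq_norm, dist_comm]
      exact hz
    have hcalc : ‖P n (T t x) - T t x‖ ≤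
        ‖P n (T t x) - P n z‖ + ‖P n z - z‖ + ‖z - T t x‖ := by
      have := norm_add₃_le (a := P n (T t x) - P n z) (b := P n z - z) (c := z - T t x)
      simpa using this
    have hδsum : C * δ + ε / 3 + δ < ε := by
      have : C * δ + δ = ε / 3 := by
        field_simp [hδdef]
        have h := div_mul_cancel₀ ε (show (3:ℝ) * (C + 1) ≠ 0 by
          have : (0:ℝ) < 3 * (C + 1) := by linarith
          exact this.ne')
        rw [← hδdef] at h
        linear_combination h
      nlinarith
    linarith
  have hinf : Metric.infDist (T t x) {y : E | 0 ≤ y} ≤ ‖P n (T t x) - T t x‖ := by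
    have hmem : P n (T t x) ∈ {y : E | 0 ≤ y} := hτ t htτ
    calc Metric.infDist (T t x) {y : E | 0 ≤ y} ≤ dist (T t x) (P n (T t x)) :=
          Metric.infDist_le_dist_of_mem hmem
      _ = ‖P n (T t x) - T t x‖ := by rw [dist_eq_norm, norm_sub_rev]
  have hnonneg : 0 ≤ Metric.infDist (T t x) {y : E | 0 ≤ y} := Metric.infDist_nonneg
  rw [Real.dist_eq, sub_zero, abs_of_nonneg hnonneg]
  linarith
end
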